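/- In a one-dimensional ISAC network with K nodes and nonempty sensing link set U(A), no free communication is possible: if (s*, f) ∈ R, where s* = Σ_{u ∈ U(A)} c_u is the maximum sensing fidelity, then f = 0. -/

import Mathlib

/-!
Capacity on a sensing link can only be spent once, so at maximal sensing fidelity every
sensing link carries no communication in either direction. On a path, flow conservation makes
the throughput equal to the net flow across any single link; a sensing link thus forces it
to vanish.
-/

/-- An ISAC network on a finite node type `V`: a symmetric, irreflexive set of
directed links `E`, a source `Tx`, a sink `Rx`, a nonnegative capacity `c` on
undirected links (unordered pairs), and a sensing region `A`. -/
structure ISACNetwork (V : Type) [Fintype V] [DecidableEq V] where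
  E : Finset (V × V)
  symm : ∀ i j : V, (i, j) ∈ E → (j, i) ∈ E
  irrefl : ∀ i : V, (i, i) ∉ E
  Tx : V
  Rx : V
  TxNeRx : Tx ≠ Rx
  c : Sym2 V → ℝ
  c_nonneg : ∀ u : Sym2 V, 0 ≤ c u
  A : Finset V

namespace ISACNetwork

variable {V : Type} [Fintype V] [DecidableEq V]

/-- `E(A)`: directed links with both endpoints in the sensing region. -/
def EA (N : ISACNetwork V) : Finset (V × V) :=
  N.E.filter fun e => e.1 ∈ N.A ∧ e.2 ∈ N.A

/-- `U(A)`: undirected links with both endpoints in the sensing region. -/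
def UA (N : ISACNetwork V) : Finset (Sym2 V) :=
  N.EA.image (fun e => Sym2.mk e.1 e.2)

/-- A valid assignment of communication rates `f` and sensing rates `s`:
nonnegative rates for which there is a nonnegative capacity split `ca` of the
undirected link capacities with `f e + s e ≤ ca e` on each directed link, no
communication into the source or out of the sink, and flow conservation at
every intermediate node. -/
def Valid (N : ISACNetwork V) (f s : V × V → ℝ) : Prop :=
  (∀ e ∈ N.E, 0 ≤ f e) ∧ (∀ e ∈ N.E, 0 ≤ s e) ∧
  ∃ ca : V × V → ℝ,
    (∀ e ∈ N.E, 0 ≤ ca e) ∧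
    (∀ i j : V, (i, j) ∈ N.E → ca (i, j) + ca (j, i) = N.c (Sym2.mk i j)) ∧
    (∀ e ∈ N.E, f e + s e ≤ ca e) ∧
    (∀ i : V, (i, N.Tx) ∈ N.E → f (i, N.Tx) = 0) ∧
    (∀ j : V, (N.Rx, j) ∈ N.E → f (N.Rx, j) = 0) ∧
    (∀ j : V, j ≠ N.Tx → j ≠ N.Rx →
      ∑ i ∈ Finset.univ.filter (fun i => (i, j) ∈ N.E), f (i, j)
        = ∑ k ∈ Finset.univ.filter (fun k => (j, k) ∈ N.E), f (j, k))

/-- The sensing fidelity achieved by a sensing-rate assignment. -/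
def sensOf (N : ISACNetwork V) (s : V × V → ℝ) : ℝ := ∑ e ∈ N.EA, s e

/-- The throughput achieved by a communication-rate assignment. -/
def flowOf (N : ISACNetwork V) (f : V × V → ℝ) : ℝ :=
  ∑ j ∈ Finset.univ.filter (fun j => (N.Tx, j) ∈ N.E), f (N.Tx, j)

/-- The sensing–throughput region: all pairs `(s, f)` achieved by a valid
assignment. -/
def Region (N : ISACNetwork V) : Set (ℝ × ℝ) :=
  { p | ∃ fr sr : V × V → ℝ, N.Valid fr sr ∧ N.sensOf sr = p.1 ∧ N.flowOf fr = p.2 }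

end ISACNetwork

/-- The one-dimensional ISAC network with `K ≥ 2` nodes: nodes `0, …, K-1`
(standing for `1, …, K`), links between consecutive nodes in both directions,
source node `0` and sink node `K-1`. -/
def pathNetwork (K : ℕ) (hK : 2 ≤ K) (cap : Sym2 (Fin K) → ℝ)
    (hcap : ∀ u, 0 ≤ cap u) (A : Finset (Fin K)) : ISACNetwork (Fin K) where
  E := Finset.univ.filter fun e : Fin K × Fin K =>
    e.1.val + 1 = e.2.val ∨ e.2.val + 1 = e.1.val
  symm := by
    intro i j h
    simp only [Finset.mem_filter, Finset.mem_univ, true_and] at h ⊢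
    tauto
  irrefl := by
    intro i h
    simp only [Finset.mem_filter, Finset.mem_univ, true_and] at h
    omega
  Tx := ⟨0, by omega⟩
  Rx := ⟨K - 1, by omega⟩
  TxNeRx := by
    rw [Fin.ne_iff_vne]
    simp only [ne_eq]
    omega
  c := cap
  c_nonneg := hcap
  A := A

/-- `c_min`: the smallest undirected link capacity of the one-dimensional
ISAC network, `min_{1 ≤ j ≤ K-1} c_{{j,j+1}}`. -/
noncomputable def cmin (K : ℕ) (hK : 2 ≤ K) (cap : Sym2 (Fin K) → ℝ) : ℝ :=
  (Finset.univ : Finset (Fin (K - 1))).inf'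
    (Finset.univ_nonempty_iff.mpr ⟨⟨0, by omega⟩⟩)
    (fun j => cap (Sym2.mk ⟨j.val, by have := j.isLt; omega⟩
      ⟨j.val + 1, by have := j.isLt; omega⟩))

namespace ISACNetwork

variable {V : Type} [Fintype V] [DecidableEq V] (N : ISACNetwork V)

theorem mem_E_of_mem_EA {e : V × V} (he : e ∈ N.EA) : e ∈ N.E :=
  (Finset.mem_filter.mp he).1

theorem swap_mem_EA {e : V × V} (he : e ∈ N.EA) : e.swap ∈ N.EA := by
  simp only [EA, Finset.mem_filter] at he ⊢
  exact ⟨N.symm _ _ he.1, he.2.2, he.2.1⟩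

theorem filter_EA_mk_eq {p : V × V} (hp : p ∈ N.EA) :
    N.EA.filter (fun q => s(q.1, q.2) = s(p.1, p.2)) = {p, p.swap} := by
  ext q
  simp only [Finset.mem_filter, Finset.mem_insert, Finset.mem_singleton, Sym2.mk_eq_mk_iff]
  constructor
  · exact fun h => h.2
  · rintro (rfl | rfl)
    · exact ⟨hp, Or.inl rfl⟩
    · exact ⟨N.swap_mem_EA hp, Or.inr rfl⟩

/-- Each undirected sensing link is the image of exactly two directed links of `E(A)`, whose
shares of the capacity add up to the link's capacity. -/
theorem sum_UA_c_eq_sum_EA {ca : V × V → ℝ}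
    (hca : ∀ i j : V, (i, j) ∈ N.E → ca (i, j) + ca (j, i) = N.c s(i, j)) :
    ∑ u ∈ N.UA, N.c u = ∑ e ∈ N.EA, ca e := by
  refine Finset.sum_image' ca fun ⟨a, b⟩ hp => ?_
  have hab : a ≠ b := by
    rintro rfl
    exact N.irrefl a (N.mem_E_of_mem_EA hp)
  have hne : (a, b) ≠ (b, a) := fun h => hab (congrArg Prod.fst h)
  rw [N.filter_EA_mk_eq hp, Prod.swap_prod_mk, Finset.sum_pair hne]
  exact (hca a b (N.mem_E_of_mem_EA hp)).symm

theorem Valid.eq_zero_of_mem_EA {f s : V × V → ℝ} (hv : N.Valid f s)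
    (hs : N.sensOf s = ∑ u ∈ N.UA, N.c u) {e : V × V} (he : e ∈ N.EA) : f e = 0 := by
  obtain ⟨hf, -, ca, -, hca, hfs, -⟩ := hv
  have hf_nonneg : ∀ e ∈ N.EA, 0 ≤ f e := fun e he => hf e (N.mem_E_of_mem_EA he)
  have hsum : ∑ e ∈ N.EA, f e ≤ 0 := by
    have hle : ∑ e ∈ N.EA, (f e + s e) ≤ ∑ e ∈ N.EA, ca e :=
      Finset.sum_le_sum fun e he => hfs e (N.mem_E_of_mem_EA he)
    rw [Finset.sum_add_distrib, ← N.sum_UA_c_eq_sum_EA hca, ← hs, sensOf] at hle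
    linarith
  exact (Finset.sum_eq_zero_iff_of_nonneg hf_nonneg).mp
    (le_antisymm hsum (Finset.sum_nonneg hf_nonneg)) e he

end ISACNetwork

namespace pathNetwork

variable {K : ℕ} {hK : 2 ≤ K} {cap : Sym2 (Fin K) → ℝ} {hcap : ∀ u, 0 ≤ cap u}
  {A : Finset (Fin K)}

theorem mem_E {i j : Fin K} :
    (i, j) ∈ (pathNetwork K hK cap hcap A).E ↔ i.val + 1 = j.val ∨ j.val + 1 = i.val := by
  simp [pathNetwork]

theorem Tx_val : (pathNetwork K hK cap hcap A).Tx.val = 0 := rfl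

theorem Rx_val : (pathNetwork K hK cap hcap A).Rx.val = K - 1 := rfl

theorem filter_Tx_mem_E :
    Finset.univ.filter (fun k => ((pathNetwork K hK cap hcap A).Tx, k)
      ∈ (pathNetwork K hK cap hcap A).E) = {⟨1, hK⟩} := by
  ext k
  simp only [Finset.mem_filter, Finset.mem_univ, true_and, Finset.mem_singleton, mem_E,
    Fin.ext_iff, Tx_val]
  omega

theorem filter_mem_E_succ_left {m : ℕ} (hm : m + 2 < K) :
    Finset.univ.filter (fun k => ((⟨m + 1, by omega⟩ : Fin K), k)
      ∈ (pathNetwork K hK cap hcap A).E) = {⟨m, by omega⟩, ⟨m + 2, hm⟩} := by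
  ext k
  simp only [Finset.mem_filter, Finset.mem_univ, true_and, Finset.mem_insert,
    Finset.mem_singleton, mem_E, Fin.ext_iff]
  omega

theorem filter_mem_E_succ_right {m : ℕ} (hm : m + 2 < K) :
    Finset.univ.filter (fun i => (i, (⟨m + 1, by omega⟩ : Fin K))
      ∈ (pathNetwork K hK cap hcap A).E) = {⟨m, by omega⟩, ⟨m + 2, hm⟩} := by
  ext k
  simp only [Finset.mem_filter, Finset.mem_univ, true_and, Finset.mem_insert,
    Finset.mem_singleton, mem_E, Fin.ext_iff]
  omega

theorem flowOf_eq_net_flow {f s : Fin K × Fin K → ℝ}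
    (hv : (pathNetwork K hK cap hcap A).Valid f s) (m : ℕ) (hm : m + 1 < K) :
    (pathNetwork K hK cap hcap A).flowOf f
      = f (⟨m, by omega⟩, ⟨m + 1, hm⟩) - f (⟨m + 1, hm⟩, ⟨m, by omega⟩) := by
  obtain ⟨-, -, -, -, -, -, hTx, -, hcons⟩ := hv
  induction m with
  | zero =>
    have hin : f (⟨1, hm⟩, ⟨0, by omega⟩) = 0 := hTx ⟨1, hm⟩ (mem_E.mpr (Or.inr rfl))
    rw [ISACNetwork.flowOf, filter_Tx_mem_E, Finset.sum_singleton, hin, sub_zero]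
    rfl
  | succ m ih =>
    have hne : (⟨m, by omega⟩ : Fin K) ≠ ⟨m + 2, hm⟩ := by simp [Fin.ext_iff]
    have hc := hcons ⟨m + 1, by omega⟩ (by simp only [Ne, Fin.ext_iff, Tx_val]; omega)
      (by simp only [Ne, Fin.ext_iff, Rx_val]; omega)
    rw [filter_mem_E_succ_left hm, filter_mem_E_succ_right hm, Finset.sum_pair hne,
      Finset.sum_pair hne] at hc
    rw [ih (by omega)]
    linarith

/-- On a path every link is a cut separating the source from the sink. -/
theorem abs_flowOf_eq {f s : Fin K × Fin K → ℝ} (hv : (pathNetwork K hK cap hcap A).Valid f s)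
    {i j : Fin K} (hij : (i, j) ∈ (pathNetwork K hK cap hcap A).E) :
    |(pathNetwork K hK cap hcap A).flowOf f| = |f (i, j) - f (j, i)| := by
  obtain ⟨i, hi⟩ := i
  obtain ⟨j, hj⟩ := j
  rcases mem_E.mp hij with rfl | rfl
  · exact congrArg abs (flowOf_eq_net_flow hv i hj)
  · rw [flowOf_eq_net_flow hv j hi, abs_sub_comm]

end pathNetwork

/-- In a one-dimensional ISAC network with nonempty sensing link set `U(A)`,
no free communication is possible: if `(s*, f) ∈ R`, where
`s* = Σ_{u ∈ U(A)} c_u` is the maximum sensing fidelity, then `f = 0`. -/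
theorem oneD_no_free_communication {K : ℕ} (hK : 2 ≤ K)
    (cap : Sym2 (Fin K) → ℝ) (hcap : ∀ u, 0 ≤ cap u) (A : Finset (Fin K))
    (hUA : (pathNetwork K hK cap hcap A).UA.Nonempty) (f : ℝ)
    (h : (∑ u ∈ (pathNetwork K hK cap hcap A).UA, cap u, f)
        ∈ (pathNetwork K hK cap hcap A).Region) :
    f = 0 := by
  obtain ⟨fr, sr, hv, hsens, hflow⟩ := h
  obtain ⟨p, hp⟩ := Finset.image_nonempty.mp hUA
  have hfp : fr p = 0 := hv.eq_zero_of_mem_EA _ hsens hp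
  have hfp_swap : fr (p.2, p.1) = 0 := hv.eq_zero_of_mem_EA _ hsens (ISACNetwork.swap_mem_EA _ hp)
  have hflow_abs := pathNetwork.abs_flowOf_eq hv (ISACNetwork.mem_E_of_mem_EA _ hp)
  rw [hflow, hfp, hfp_swap, sub_zero, abs_zero] at hflow_abs
  exact abs_eq_zero.mp hflow_abs
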